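/- arXiv:2002.11439 — 10 statements merged into one kernel-verified Lean document; each statement's English description precedes it below -/
import Mathlib

section
/- Rees(A, F) is an R-subalgebra of the polynomial ring A[X] containing the variable X; the evaluation-at-1 homomorphism A[X] → A restricts to a surjective R-algebra homomorphism Rees(A, F) → A; and the kernel of this restricted homomorphism is the ideal of Rees(A, F) generated by the element X − 1. -/
/-! A polynomial in the kernel of evaluation at `1` factors as `(X - 1) * q` in `A[X]`. Comparing
coefficients, `q_{i+1} = q_i - p_{i+1}`, so by induction and monotonicity of `F` the coefficients
of `q` satisfy the same filtration condition as those of `p`: the factorization happens inside the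
Rees algebra. -/

open Polynomial

namespace Polynomial

section FiltrationReesAlgebra

variable {R A : Type*} [CommRing R] [CommRing A] [Algebra R A] (F : ℕ → Submodule R A)

def filtrationReesAlgebra (hone : (1 : A) ∈ F 0) (hmul : ∀ i j, F i * F j ≤ F (i + j)) :
    Subalgebra R A[X] where
  carrier := {p | ∀ i, p.coeff i ∈ F i}
  add_mem' hp hq i := by
    simpa only [coeff_add] using add_mem (hp i) (hq i)
  mul_mem' {p q} hp hq i := by
    rw [coeff_mul]
    refine Submodule.sum_mem _ fun x hx => ?_
    rw [← Finset.HasAntidiagonal.mem_antidiagonal.mp hx]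
    exact hmul x.1 x.2 (Submodule.mul_mem_mul (hp x.1) (hq x.2))
  algebraMap_mem' r i := by
    rw [algebraMap_apply, coeff_C]
    split_ifs with hi
    · subst hi
      rw [Algebra.algebraMap_eq_smul_one]
      exact Submodule.smul_mem _ _ hone
    · exact zero_mem _

variable {F} {hone : (1 : A) ∈ F 0} {hmul : ∀ i j, F i * F j ≤ F (i + j)}

theorem mem_filtrationReesAlgebra {p : A[X]} :
    p ∈ filtrationReesAlgebra F hone hmul ↔ ∀ i, p.coeff i ∈ F i :=
  Iff.rfl

theorem monomial_mem_filtrationReesAlgebra {n : ℕ} {a : A} (ha : a ∈ F n) :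
    monomial n a ∈ filtrationReesAlgebra F hone hmul := by
  intro i
  rw [coeff_monomial]
  split_ifs with hi
  · exact hi ▸ ha
  · exact zero_mem _

theorem X_mem_filtrationReesAlgebra (hmono : Monotone F) :
    X ∈ filtrationReesAlgebra F hone hmul := by
  rw [← monomial_one_one_eq_X]
  exact monomial_mem_filtrationReesAlgebra (hmono zero_le_one hone)

theorem mem_filtrationReesAlgebra_of_X_sub_one_mul_mem (hmono : Monotone F) {q : A[X]}
    (hq : (X - C 1) * q ∈ filtrationReesAlgebra F hone hmul) :
    q ∈ filtrationReesAlgebra F hone hmul := by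
  intro i
  induction i with
  | zero =>
    have hcoeff : ((X - C 1) * q).coeff 0 = -q.coeff 0 := by simp [sub_mul]
    simpa [hcoeff] using hq 0
  | succ n ih =>
    have hcoeff : q.coeff (n + 1) = q.coeff n - ((X - C 1) * q).coeff (n + 1) := by
      rw [coeff_X_sub_C_mul, one_mul, sub_sub_cancel]
    rw [hcoeff]
    exact sub_mem (hmono n.le_succ ih) (hq (n + 1))

variable (F hone hmul)

noncomputable def filtrationReesAlgebra.evalOne : filtrationReesAlgebra F hone hmul →ₐ[R] A :=
  ((aeval (1 : A)).restrictScalars R).comp (filtrationReesAlgebra F hone hmul).val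

variable {F hone hmul}

theorem filtrationReesAlgebra.evalOne_apply (p : filtrationReesAlgebra F hone hmul) :
    evalOne F hone hmul p = (p : A[X]).eval 1 := by
  simp [evalOne]

theorem filtrationReesAlgebra.evalOne_surjective (hmono : Monotone F) (hsup : ⨆ i, F i = ⊤) :
    Function.Surjective (evalOne F hone hmul) := by
  intro a
  have ha : a ∈ ⨆ i, F i := hsup ▸ Submodule.mem_top
  obtain ⟨n, hn⟩ := (Submodule.mem_iSup_of_directed _ hmono.directed_le).mp ha
  exact ⟨⟨monomial n a, monomial_mem_filtrationReesAlgebra hn⟩, by simp [evalOne_apply]⟩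

theorem filtrationReesAlgebra.ker_evalOne (hmono : Monotone F) :
    RingHom.ker (evalOne F hone hmul) =
      Ideal.span {⟨X, X_mem_filtrationReesAlgebra hmono⟩ - 1} := by
  ext p
  rw [RingHom.mem_ker, evalOne_apply, Ideal.mem_span_singleton', ← IsRoot.def,
    ← mul_divByMonic_eq_iff_isRoot]
  constructor
  · intro hfac
    have hdiv := mem_filtrationReesAlgebra_of_X_sub_one_mul_mem hmono (hfac.symm ▸ p.2)
    exact ⟨⟨_, hdiv⟩, Subtype.ext (by simpa [mul_comm] using hfac)⟩
  · rintro ⟨q, rfl⟩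
    rw [mul_divByMonic_eq_iff_isRoot]
    simp

end FiltrationReesAlgebra

end Polynomial

open Polynomial.filtrationReesAlgebra in
/-- Let `R` be a commutative ring and `A` a commutative `R`-algebra with a
monotone multiplicative exhaustive filtration `F`. Then the Rees algebra
`{p : A[X] | ∀ i, p.coeff i ∈ F i}` is an `R`-subalgebra of `A[X]` containing `X`; the
evaluation-at-1 homomorphism restricts to a surjective `R`-algebra homomorphism from it to `A`,
whose kernel is the ideal generated by `X - 1`. -/
theorem stmt0 (R A : Type*) [CommRing R] [CommRing A] [Algebra R A]
    (F : ℕ → Submodule R A) (hmono : Monotone F) (hone : (1 : A) ∈ F 0)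
    (hmul : ∀ i j, F i * F j ≤ F (i + j)) (hsup : (⨆ i, F i) = ⊤) :
    ∃ S : Subalgebra R (Polynomial A),
      (S : Set (Polynomial A)) = {p : Polynomial A | ∀ i, p.coeff i ∈ F i} ∧
      ∃ x : S, (x : Polynomial A) = Polynomial.X ∧
      ∃ φ : S →ₐ[R] A,
        (∀ p : S, φ p = Polynomial.eval 1 (p : Polynomial A)) ∧
        Function.Surjective φ ∧
        RingHom.ker φ = Ideal.span {x - 1} :=
  ⟨filtrationReesAlgebra F hone hmul, rfl, ⟨X, X_mem_filtrationReesAlgebra hmono⟩, rfl,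
    evalOne F hone hmul, evalOne_apply, evalOne_surjective hmono hsup, ker_evalOne hmono⟩
end

section
/- If gr_0(F) and gr_i(F) for every i ≥ 1 are flat R-modules, then Rees(A, F) is flat as a module over the polynomial ring R[X]. -/
/-!
The Rees module is the increasing union of the `R[X]`-submodules
`Mₙ = {p | pᵢ ∈ F (min i n)}`. Reading off the coefficients from degree `n` on identifies
`M₀` with `F₀[X]` and `Mₙ₊₁ / Mₙ` with `grₙ₊₁[X]`, and `V[X] = R[X] ⊗[R] V` is `R[X]`-flat
whenever `V` is `R`-flat. So every `Mₙ` is flat, because flatness is stable under extensions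
(a diagram chase after tensoring with an ideal), and so is their union, because flatness is
stable under directed unions (the equational criterion only involves finitely many elements).
-/

open Polynomial LinearMap

namespace Module.Flat

variable {R M N P : Type*} [CommRing R] [AddCommGroup M] [Module R M] [AddCommGroup N]
  [Module R N] [AddCommGroup P] [Module R P]

theorem of_exact {f : N →ₗ[R] M} {g : M →ₗ[R] P} (hf : Function.Injective f)
    (hfg : Function.Exact f g) (hg : Function.Surjective g) [Flat R N] [Flat R P] :
    Flat R M := by
  refine iff_rTensor_injective'.2 fun I ↦ (injective_iff_map_eq_zero _).2 fun x hx ↦ ?_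
  obtain ⟨y, rfl⟩ : x ∈ Set.range (lTensor I f) := by
    refine (_root_.lTensor_exact I hfg hg x).1 <| (injective_iff_map_eq_zero _).1
      (rTensor_preserves_injective_linearMap (M := P) I.subtype Subtype.val_injective) _ ?_
    rw [← comp_apply, rTensor_comp_lTensor, ← lTensor_comp_rTensor, comp_apply, hx, map_zero]
  have hy : lTensor R f (rTensor N I.subtype y) = 0 := by
    rw [← comp_apply, lTensor_comp_rTensor, ← rTensor_comp_lTensor, comp_apply, hx]
  rw [(injective_iff_map_eq_zero _).1 (iff_rTensor_injective'.1 ‹_› I) y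
    ((injective_iff_map_eq_zero _).1 (lTensor_preserves_injective_linearMap f hf) _ hy), map_zero]

theorem iSup_of_directed {ι : Type*} [Nonempty ι] {N : ι → Submodule R M}
    (hN : Directed (· ≤ ·) N) [∀ i, Flat R (N i)] : Flat R ↥(⨆ i, N i) := by
  classical
  refine of_forall_isTrivialRelation fun {l f x} hfx ↦ ?_
  choose j hj using fun k ↦ (Submodule.mem_iSup_of_directed N hN).1 (x k).2
  obtain ⟨i, hi⟩ := hN.finset_le (Finset.univ.image j)
  let x' : Fin l → N i := fun k ↦ ⟨x k, hi _ (Finset.mem_image_of_mem _ (Finset.mem_univ k)) (hj k)⟩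
  have hx' : ∑ k, f k • x' k = 0 := Subtype.ext (by simpa using congrArg Subtype.val hfx)
  obtain ⟨m, a, y, hxy, ha⟩ := isTrivialRelation_of_sum_smul_eq_zero hx'
  refine ⟨m, a, fun t ↦ Submodule.inclusion (le_iSup N i) (y t), fun k ↦ Subtype.ext ?_, ha⟩
  simpa using congrArg Subtype.val (hxy k)

end Module.Flat

instance PolynomialModule.flat {R V : Type*} [CommRing R] [AddCommGroup V] [Module R V]
    [Module.Flat R V] : Module.Flat R[X] (PolynomialModule R V) :=
  .of_linearEquiv (PolynomialModule.polynomialTensorProductLEquivPolynomialModule R V).symm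

def AddMonoidHom.toPolynomialLinearMap {R M N : Type*} [CommRing R] [AddCommGroup M]
    [Module R[X] M] [AddCommGroup N] [Module R[X] N] (f : M →+ N)
    (hC : ∀ (a : R) (m : M), f (C a • m) = C a • f m)
    (hX : ∀ m, f ((X : R[X]) • m) = (X : R[X]) • f m) :
    M →ₗ[R[X]] N where
  __ := f
  map_smul' s m := by
    change f (s • m) = s • f m
    induction s using Polynomial.induction_on with
    | C a => exact hC a m
    | add p q hp hq => simp_all [add_smul]
    | monomial k a ih =>
      rw [show C a * X ^ (k + 1) = X * (C a * X ^ k) by ring, mul_smul, hX, ih, ← mul_smul]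

noncomputable abbrev Polynomial.mapAlgebra {R A : Type*} [CommRing R] [CommRing A]
    [Algebra R A] : Algebra R[X] A[X] :=
  (mapRingHom (algebraMap R A)).toAlgebra

section Rees

attribute [local instance] Polynomial.mapAlgebra

variable {R A : Type*} [CommRing R] [CommRing A] [Algebra R A]

theorem Polynomial.mapAlgebra_smul (s : R[X]) (p : A[X]) : s • p = s.map (algebraMap R A) * p :=
  rfl

theorem Polynomial.mapAlgebra_C_smul (a : R) (p : A[X]) : (C a : R[X]) • p = a • p := by
  rw [mapAlgebra_smul, map_C, ← smul_eq_C_mul, algebraMap_smul]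

theorem Polynomial.mapAlgebra_X_smul (p : A[X]) : (X : R[X]) • p = X * p := by
  rw [mapAlgebra_smul, map_X]

variable {F : ℕ → Submodule R A}

def reesFiltration (hF : Monotone F) (n : ℕ) : Submodule R[X] A[X] where
  carrier := {p | ∀ i, p.coeff i ∈ F (min i n)}
  add_mem' hp hq i := by simpa using add_mem (hp i) (hq i)
  zero_mem' i := by simp
  smul_mem' s p hp i := by
    simp only [mapAlgebra_smul, coeff_mul, coeff_map, ← Algebra.smul_def]
    refine Submodule.sum_mem _ fun x hx ↦ Submodule.smul_mem _ _ (hF ?_ (hp x.2))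
    have := Finset.HasAntidiagonal.antidiagonal.snd_le hx
    omega

variable (hF : Monotone F)

theorem reesFiltration_mono : Monotone (reesFiltration hF) :=
  fun _ _ hmn _ hp i ↦ hF (min_le_min_left i hmn) (hp i)

theorem mem_iSup_reesFiltration {p : A[X]} :
    p ∈ ⨆ n, reesFiltration hF n ↔ ∀ i, p.coeff i ∈ F i := by
  rw [Submodule.mem_iSup_of_directed _ (reesFiltration_mono hF).directed_le]
  refine ⟨fun ⟨n, hp⟩ i ↦ hF (min_le_left i n) (hp i), fun hp ↦ ⟨p.natDegree, fun i ↦ ?_⟩⟩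
  rcases le_or_gt i p.natDegree with hi | hi
  · simpa [min_eq_left hi] using hp i
  · simp [coeff_eq_zero_of_natDegree_lt hi]

theorem coeff_add_mem_of_mem_reesFiltration {n : ℕ} {p : A[X]} (hp : p ∈ reesFiltration hF n)
    (j : ℕ) : p.coeff (n + j) ∈ F n := by
  simpa using hp (n + j)

namespace reesFiltration

variable {V : Type*} [AddCommGroup V] [Module R V] {n : ℕ} (κ : F n →ₗ[R] V)

noncomputable def leadingAddHom : reesFiltration hF n →+ PolynomialModule R V where
  toFun p := PolynomialModule.ofCoeff R <| Finsupp.ofSupportFinite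
    (fun j ↦ κ ⟨(p : A[X]).coeff (n + j), coeff_add_mem_of_mem_reesFiltration hF p.2 j⟩)
    ((p : A[X]).support.finite_toSet.preimage (add_right_injective n).injOn |>.subset
      fun j hj ↦ mem_support_iff.2 fun h ↦ hj <| by
        change κ _ = 0
        rw [(Submodule.mk_eq_zero _ _).2 h, map_zero])
  map_zero' := by
    ext j
    exact map_zero κ
  map_add' p q := by
    ext j
    exact map_add κ ⟨(p : A[X]).coeff (n + j), _⟩ ⟨(q : A[X]).coeff (n + j), _⟩

theorem coeff_leadingAddHom (p : reesFiltration hF n) (j : ℕ) :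
    (leadingAddHom hF κ p).coeff j =
      κ ⟨(p : A[X]).coeff (n + j), coeff_add_mem_of_mem_reesFiltration hF p.2 j⟩ :=
  rfl

variable (hκ : ∀ m < n, ∀ a : F n, (a : A) ∈ F m → κ a = 0)

/-- Multiplication by `X` moves the coefficient `pₙ₋₁ ∈ Fₙ₋₁` to degree `n`, where `hκ` kills it;
this is what makes the shift by `n` commute with `X`. -/
noncomputable def leading : reesFiltration hF n →ₗ[R[X]] PolynomialModule R V :=
  (leadingAddHom hF κ).toPolynomialLinearMap
    (fun a p ↦ by
      ext j
      rw [← monomial_zero_left, PolynomialModule.monomial_smul_apply, if_pos j.zero_le,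
        Nat.sub_zero, coeff_leadingAddHom, coeff_leadingAddHom, ← map_smul]
      congr
      simp [mapAlgebra_C_smul])
    (fun p ↦ by
      ext j
      rw [coeff_leadingAddHom]
      conv_rhs => rw [← monomial_one_one_eq_X, PolynomialModule.monomial_smul_apply]
      rcases j with _ | j
      · rcases n with _ | m
        · rw [← map_zero κ]
          congr 1
          ext
          simp [mapAlgebra_X_smul]
        · refine hκ m m.lt_succ_self _ ?_
          simpa [mapAlgebra_X_smul] using p.2 m
      · simp [mapAlgebra_X_smul, ← add_assoc, coeff_leadingAddHom])

theorem coeff_leading (p : reesFiltration hF n) (j : ℕ) :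
    (leading hF κ hκ p).coeff j =
      κ ⟨(p : A[X]).coeff (n + j), coeff_add_mem_of_mem_reesFiltration hF p.2 j⟩ :=
  rfl

theorem leading_eq_zero_iff (p : reesFiltration hF n) :
    leading hF κ hκ p = 0 ↔
      ∀ j, κ ⟨(p : A[X]).coeff (n + j), coeff_add_mem_of_mem_reesFiltration hF p.2 j⟩ = 0 := by
  simp [← PolynomialModule.coeff_inj, Finsupp.ext_iff, coeff_leading]

theorem leading_surjective (hκs : Function.Surjective κ) :
    Function.Surjective (leading hF κ hκ) := by
  intro q
  induction q using PolynomialModule.induction_linear with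
  | zero => exact ⟨0, map_zero _⟩
  | add q q' hq hq' =>
    obtain ⟨p, rfl⟩ := hq
    obtain ⟨p', rfl⟩ := hq'
    exact ⟨p + p', map_add _ _ _⟩
  | single i v =>
    obtain ⟨a, rfl⟩ := hκs v
    have ha : monomial (n + i) (a : A) ∈ reesFiltration hF n := fun k ↦ by
      rw [coeff_monomial]
      split_ifs with hk
      · simp [← hk]
      · exact zero_mem _
    refine ⟨⟨_, ha⟩, ?_⟩
    ext j
    rw [coeff_leading, PolynomialModule.coeff_single, Finsupp.single_apply]
    split_ifs with hij
    · simp [hij]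
    · rw [← map_zero κ]
      congr 1
      ext
      simp [coeff_monomial, hij]

end reesFiltration

open reesFiltration

theorem flat_reesFiltration_zero [Module.Flat R (F 0)] :
    Module.Flat R[X] (reesFiltration hF 0) := by
  let L := leading hF (LinearMap.id : F 0 →ₗ[R] F 0) (by simp)
  have hL : Function.Injective L := by
    refine (injective_iff_map_eq_zero L).2 fun p hp ↦ Subtype.ext <| Polynomial.ext fun j ↦ ?_
    simpa using congrArg Subtype.val ((leading_eq_zero_iff ..).1 hp j)
  exact .of_linearEquiv (.ofBijective L ⟨hL, leading_surjective _ _ _ Function.surjective_id⟩)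

theorem flat_reesFiltration_succ (n : ℕ)
    [Module.Flat R (F (n + 1) ⧸ (F n).comap (F (n + 1)).subtype)]
    [Module.Flat R[X] (reesFiltration hF n)] : Module.Flat R[X] (reesFiltration hF (n + 1)) := by
  let Q := (F n).comap (F (n + 1)).subtype
  have hκ : ∀ m < n + 1, ∀ a : F (n + 1), (a : A) ∈ F m → Q.mkQ a = 0 := fun m hm a ha ↦
    (Submodule.Quotient.mk_eq_zero Q).2 (hF (Nat.le_of_lt_succ hm) ha)
  refine .of_exact (Submodule.inclusion_injective (reesFiltration_mono hF n.le_succ))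
    (fun p ↦ ?_) (leading_surjective hF Q.mkQ hκ Q.mkQ_surjective)
  simp only [leading_eq_zero_iff, Submodule.mkQ_apply, Submodule.Quotient.mk_eq_zero, Q,
    Submodule.mem_comap, Submodule.subtype_apply, Set.mem_range]
  constructor
  · refine fun h ↦ ⟨⟨p, fun i ↦ ?_⟩, rfl⟩
    rcases le_or_gt i n with hi | hi
    · simpa [hi, hi.trans n.le_succ] using p.2 i
    · obtain ⟨j, rfl⟩ := Nat.exists_eq_add_of_lt hi
      simpa [add_right_comm n j 1, show min (n + 1 + j) n = n by omega] using h j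
  · rintro ⟨q, rfl⟩ j
    simpa [show min (n + 1 + j) n = n by omega] using q.2 (n + 1 + j)

end Rees

theorem stmt1_general (R A : Type*) [CommRing R] [CommRing A] [Algebra R A]
    (F : ℕ → Submodule R A) (hmono : Monotone F)
    (hflat0 : Module.Flat R (F 0))
    (hflat : ∀ i, 1 ≤ i →
      Module.Flat R (F i ⧸ Submodule.comap (F i).subtype (F (i - 1)))) :
    letI : Algebra (Polynomial R) (Polynomial A) :=
      (Polynomial.mapRingHom (algebraMap R A)).toAlgebra
    ∀ T : Subalgebra (Polynomial R) (Polynomial A),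
      (T : Set (Polynomial A)) = {p : Polynomial A | ∀ i, p.coeff i ∈ F i} →
      Module.Flat (Polynomial R) T := by
  intro T hT
  let _ : Algebra R[X] A[X] := Polynomial.mapAlgebra
  have hpieces (n : ℕ) : Module.Flat R[X] (reesFiltration hmono n) := by
    induction n with
    | zero => exact flat_reesFiltration_zero hmono
    | succ n ih =>
      have : Module.Flat R (F (n + 1) ⧸ (F n).comap (F (n + 1)).subtype) :=
        hflat (n + 1) n.succ_pos
      exact flat_reesFiltration_succ hmono n
  have hT_eq : Subalgebra.toSubmodule T = ⨆ n, reesFiltration hmono n :=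
    SetLike.ext fun p ↦ (Set.ext_iff.1 hT p).trans (mem_iSup_reesFiltration hmono).symm
  have := Module.Flat.iSup_of_directed (reesFiltration_mono hmono).directed_le
  exact .of_linearEquiv ((Subalgebra.toSubmoduleEquiv T).symm.trans (LinearEquiv.ofEq _ _ hT_eq))

/-- With `F` a monotone multiplicative exhaustive filtration on a commutative
`R`-algebra `A` with `1 ∈ F 0`, if `gr_0(F) = F 0` and the graded pieces
`gr_i(F) = F i ⧸ F (i-1)` (for `i ≥ 1`) are flat `R`-modules, then the Rees algebra
`{p : A[X] | ∀ i, p.coeff i ∈ F i}` is flat as a module over the polynomial ring `R[X]`,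
where the `R[X]`-module structure comes from the coefficient-wise map `R[X] → A[X]`. -/
theorem stmt1 (R A : Type*) [CommRing R] [CommRing A] [Algebra R A]
    (F : ℕ → Submodule R A) (hmono : Monotone F) (hone : (1 : A) ∈ F 0)
    (hmul : ∀ i j, F i * F j ≤ F (i + j)) (hsup : (⨆ i, F i) = ⊤)
    (hflat0 : Module.Flat R (F 0))
    (hflat : ∀ i, 1 ≤ i →
      Module.Flat R (F i ⧸ Submodule.comap (F i).subtype (F (i - 1)))) :
    letI : Algebra (Polynomial R) (Polynomial A) :=
      (Polynomial.mapRingHom (algebraMap R A)).toAlgebra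
    ∀ T : Subalgebra (Polynomial R) (Polynomial A),
      (T : Set (Polynomial A)) = {p : Polynomial A | ∀ i, p.coeff i ∈ F i} →
      Module.Flat (Polynomial R) T :=
  stmt1_general R A F hmono hflat0 hflat
end

section
/- If gr_0(F) and gr_i(F) for every i ≥ 1 are finitely generated projective R-modules, and there exists N such that F N = ⊤, then Rees(A, F) is a finitely generated projective module over the polynomial ring R[X]. -/
/-!
Projectivity of the graded pieces lets one choose linear projections `e j` of `A` onto `F j`
(downwards from `F N = A`). The differences `π j = e j - e (j - 1)` (`layerProj`) sum to the
identity for `j ≤ N`, take values in `F j` and vanish on `F (j - 1)`. Applied coefficientwise to a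
Rees polynomial `p`, the last property makes `π j p` divisible by `X ^ j`, say `π j p = X ^ j * q j`,
and then `p = ∑ j, X ^ j * e j (q j)`; so `p ↦ (q j)_j` splits the Rees module off
`A[X] ^ (N + 1)`. Finally `A = F N` is an iterated extension of the graded pieces, hence finite
projective over `R`, and so is its base change `A[X] = R[X] ⊗[R] A` over `R[X]`.
-/

open Polynomial

namespace Submodule

variable {R M : Type*} [Ring R] [AddCommGroup M] [Module R M] {p q : Submodule R M}

theorem exists_prodEquiv_of_projective_quotient
    [Module.Projective R (q ⧸ p.comap q.subtype)] :
    ∃ e : q ≃ₗ[R] p.comap q.subtype × (q ⧸ p.comap q.subtype),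
      ∀ x, e ((p.comap q.subtype).subtype x) = (x, 0) := by
  obtain ⟨e, he, -⟩ := ((LinearMap.exact_subtype_mkQ _).split_tfae (injective_subtype _)
    (mkQ_surjective _)).out 0 2 |>.mp
      ((p.comap q.subtype).mkQ.exists_rightInverse_of_surjective (range_mkQ _))
  exact ⟨e, fun x => by simp [he, LinearEquiv.apply_symm_apply]⟩

theorem finite_of_le_of_finite_quotient (hpq : p ≤ q) [Module.Finite R p]
    [Module.Finite R (q ⧸ p.comap q.subtype)] : Module.Finite R q :=
  have := Module.Finite.equiv (comapSubtypeEquivOfLe hpq).symm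
  .of_exact (LinearMap.exact_subtype_mkQ (p.comap q.subtype)) (mkQ_surjective _)

theorem projective_of_le_of_projective_quotient (hpq : p ≤ q) [Module.Projective R p]
    [Module.Projective R (q ⧸ p.comap q.subtype)] : Module.Projective R q := by
  obtain ⟨e, -⟩ := exists_prodEquiv_of_projective_quotient (p := p) (q := q)
  have := Module.Projective.of_equiv (comapSubtypeEquivOfLe hpq).symm
  exact .of_equiv e.symm

theorem exists_isProj_of_le_of_projective_quotient (hpq : p ≤ q)
    [Module.Projective R (q ⧸ p.comap q.subtype)] {f : M →ₗ[R] M} (hf : LinearMap.IsProj q f) :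
    ∃ g : M →ₗ[R] M, LinearMap.IsProj p g := by
  obtain ⟨e, he⟩ := exists_prodEquiv_of_projective_quotient (p := p) (q := q)
  let retraction : q →ₗ[R] p.comap q.subtype := LinearMap.fst R _ _ ∘ₗ e.toLinearMap
  refine ⟨q.subtype ∘ₗ (p.comap q.subtype).subtype ∘ₗ retraction ∘ₗ f.codRestrict q hf.map_mem,
    ⟨fun x => (retraction _).2, fun x hx => ?_⟩⟩
  have hfx : f.codRestrict q hf.map_mem x = (p.comap q.subtype).subtype ⟨⟨x, hpq hx⟩, hx⟩ :=
    Subtype.ext (hf.map_id x (hpq hx))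
  simp only [LinearMap.comp_apply, hfx, retraction, LinearEquiv.coe_coe, he, LinearMap.fst_apply]
  rfl

end Submodule

section Filtration

variable {R M : Type*} [Ring R] [AddCommGroup M] [Module R M] {F : ℕ → Submodule R M}

theorem finite_of_finite_graded (hF : Monotone F) [Module.Finite R (F 0)]
    (h : ∀ j, Module.Finite R (F (j + 1) ⧸ (F j).comap (F (j + 1)).subtype)) (n : ℕ) :
    Module.Finite R (F n) := by
  induction n with
  | zero => infer_instance
  | succ n ih => exact Submodule.finite_of_le_of_finite_quotient (hF n.le_succ)

theorem projective_of_projective_graded (hF : Monotone F) [Module.Projective R (F 0)]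
    (h : ∀ j, Module.Projective R (F (j + 1) ⧸ (F j).comap (F (j + 1)).subtype)) (n : ℕ) :
    Module.Projective R (F n) := by
  induction n with
  | zero => infer_instance
  | succ n ih => exact Submodule.projective_of_le_of_projective_quotient (hF n.le_succ)

theorem exists_isProj_of_projective_graded (hF : Monotone F) {N : ℕ} (hN : F N = ⊤)
    (h : ∀ j, Module.Projective R (F (j + 1) ⧸ (F j).comap (F (j + 1)).subtype)) (j : ℕ) :
    ∃ e : Module.End R M, LinearMap.IsProj (F j) e := by
  suffices ∀ k j, N ≤ j + k → ∃ e : Module.End R M, LinearMap.IsProj (F j) e from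
    this N j (by omega)
  intro k
  induction k with
  | zero =>
    intro j hj
    have hFj : F j = ⊤ := eq_top_iff.mpr (hN ▸ hF hj)
    exact ⟨LinearMap.id, fun x => hFj ▸ Submodule.mem_top, fun _ _ => rfl⟩
  | succ k ih =>
    intro j hj
    obtain ⟨f, hf⟩ := ih (j + 1) (by omega)
    exact Submodule.exists_isProj_of_le_of_projective_quotient (hF j.le_succ) hf

def layerProj (e : ℕ → Module.End R M) : ℕ → Module.End R M
  | 0 => e 0
  | j + 1 => e (j + 1) - e j

theorem sum_layerProj (e : ℕ → Module.End R M) (n : ℕ) :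
    ∑ j ∈ Finset.range (n + 1), layerProj e j = e n := by
  induction n with
  | zero => simp [layerProj]
  | succ n ih => rw [Finset.sum_range_succ, ih, layerProj, add_sub_cancel]

variable {e : ℕ → Module.End R M}

theorem layerProj_apply_eq_zero (hF : Monotone F) (he : ∀ j, LinearMap.IsProj (F j) (e j))
    {i j : ℕ} (hij : i < j) {a : M} (ha : a ∈ F i) : layerProj e j a = 0 := by
  obtain ⟨j, rfl⟩ : ∃ k, j = k + 1 := Nat.exists_eq_add_one_of_ne_zero (by omega)
  rw [layerProj, LinearMap.sub_apply, (he j).map_id a (hF (by omega) ha),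
    (he (j + 1)).map_id a (hF (by omega) ha), sub_self]

theorem apply_layerProj (hF : Monotone F) (he : ∀ j, LinearMap.IsProj (F j) (e j)) (j : ℕ)
    (a : M) : e j (layerProj e j a) = layerProj e j a := by
  cases j with
  | zero => exact (he 0).map_id _ ((he 0).map_mem a)
  | succ j =>
    rw [layerProj, LinearMap.sub_apply, map_sub, (he (j + 1)).map_id _ ((he (j + 1)).map_mem a),
      (he (j + 1)).map_id _ (hF j.le_succ ((he j).map_mem a))]

end Filtration

attribute [local instance] Polynomial.algebra

namespace Polynomial

section Semiring

variable {R A B : Type*} [CommSemiring R] [Semiring A] [Semiring B] [Algebra R A] [Algebra R B]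

theorem smul_eq_map_mul (c : R[X]) (p : A[X]) : c • p = c.map (algebraMap R A) * p := rfl

theorem X_pow_smul (j : ℕ) (p : A[X]) : (X ^ j : R[X]) • p = X ^ j * p := by
  rw [smul_eq_map_mul, Polynomial.map_pow, map_X]

theorem coeff_sum_monomial_apply (f : A →ₗ[R] B) (p : A[X]) (n : ℕ) :
    (p.sum fun k a => monomial k (f a)).coeff n = f (p.coeff n) := by
  rw [coeff_sum, sum_def, Finset.sum_eq_single n (fun k _ hk => by simp [coeff_monomial, hk])
    (fun hn => by simp [notMem_support_iff.mp hn])]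
  simp

noncomputable def mapCoeffs (f : A →ₗ[R] B) : A[X] →ₗ[R[X]] B[X] where
  toFun p := p.sum fun k a => monomial k (f a)
  map_add' p q := by
    ext n
    simp only [coeff_add, coeff_sum_monomial_apply, map_add]
  map_smul' c p := by
    ext n
    simp only [smul_eq_map_mul, coeff_sum_monomial_apply, RingHom.id_apply, coeff_mul, coeff_map,
      ← Algebra.smul_def, map_sum, map_smul]

@[simp]
theorem coeff_mapCoeffs (f : A →ₗ[R] B) (p : A[X]) (n : ℕ) :
    (mapCoeffs f p).coeff n = f (p.coeff n) :=
  coeff_sum_monomial_apply f p n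

end Semiring

variable {R A : Type*} [CommSemiring R] [CommSemiring A] [Algebra R A]

theorem exists_X_pow_mul_eq {M : Type*} [AddCommMonoid M] [Module R[X] M] {j : ℕ}
    (φ : M →ₗ[R[X]] A[X]) (h : ∀ m, X ^ j ∣ φ m) :
    ∃ ψ : M →ₗ[R[X]] A[X], ∀ m, X ^ j * ψ m = φ m := by
  let μ := LinearMap.mulLeft R[X] (X ^ j : A[X])
  have hμ : Function.Injective μ := (isRegular_X_pow j).left
  refine ⟨(LinearEquiv.ofInjective μ hμ).symm ∘ₗ
    φ.codRestrict (LinearMap.range μ) fun m => ?_, fun m => ?_⟩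
  · obtain ⟨t, ht⟩ := h m
    exact ⟨t, ht.symm⟩
  · exact LinearEquiv.ofInjective_symm_apply (h := hμ) μ _

theorem _root_.Module.Finite.polynomial [Module.Finite R A] : Module.Finite R[X] A[X] :=
  .equiv (Algebra.IsPushout.equiv R R[X] A A[X]).toLinearEquiv

theorem _root_.Module.Projective.polynomial [Module.Projective R A] :
    Module.Projective R[X] A[X] :=
  .of_equiv (Algebra.IsPushout.equiv R R[X] A A[X]).toLinearEquiv

end Polynomial

section Rees

variable {R A : Type*} [CommRing R] [CommRing A] [Algebra R A] {F : ℕ → Submodule R A}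

def reesModule (F : ℕ → Submodule R A) (hF : Monotone F) : Submodule R[X] A[X] where
  carrier := {p | ∀ i, p.coeff i ∈ F i}
  add_mem' hp hq i := by simpa using add_mem (hp i) (hq i)
  zero_mem' i := by simp
  smul_mem' c p hp i := by
    rw [smul_eq_map_mul, coeff_mul]
    refine sum_mem fun x hx => ?_
    rw [coeff_map, ← Algebra.smul_def]
    exact Submodule.smul_mem _ _ (hF (Finset.HasAntidiagonal.antidiagonal.snd_le hx) (hp x.2))

theorem exists_retraction_pi_reesModule (hF : Monotone F) {N : ℕ} (hN : F N = ⊤)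
    {e : ℕ → Module.End R A} (he : ∀ j, LinearMap.IsProj (F j) (e j)) :
    ∃ (s : reesModule F hF →ₗ[R[X]] Fin (N + 1) → A[X])
      (r : (Fin (N + 1) → A[X]) →ₗ[R[X]] reesModule F hF), r ∘ₗ s = LinearMap.id := by
  have hdvd : ∀ (j : ℕ) (p : reesModule F hF),
      X ^ j ∣ (mapCoeffs (layerProj e j) ∘ₗ (reesModule F hF).subtype) p := fun j p =>
    X_pow_dvd_iff.mpr fun d hd => by
      simpa using layerProj_apply_eq_zero hF he hd (p.2 d)
  choose ψ hψ using fun j : ℕ => exists_X_pow_mul_eq _ (hdvd j)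
  let r₀ : (Fin (N + 1) → A[X]) →ₗ[R[X]] A[X] :=
    ∑ j : Fin (N + 1), (X : R[X]) ^ (j : ℕ) • mapCoeffs (e j) ∘ₗ LinearMap.proj j
  have hr₀_apply (q : Fin (N + 1) → A[X]) :
      r₀ q = ∑ j : Fin (N + 1), X ^ (j : ℕ) * mapCoeffs (e j) (q j) := by
    simp [r₀, X_pow_smul]
  have hr₀ (q : Fin (N + 1) → A[X]) : r₀ q ∈ reesModule F hF := fun i => by
    rw [hr₀_apply, finsetSum_coeff]
    refine sum_mem fun j _ => ?_
    rw [coeff_X_pow_mul', coeff_mapCoeffs]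
    split_ifs with hji
    · exact hF hji ((he j).map_mem _)
    · exact zero_mem _
  refine ⟨LinearMap.pi fun j => ψ j, r₀.codRestrict _ hr₀, ?_⟩
  ext1 p
  apply Subtype.ext
  have hlayer (j : ℕ) : X ^ j * mapCoeffs (e j) (ψ j p) = mapCoeffs (layerProj e j) p := by
    rw [← X_pow_smul (R := R), ← map_smul, X_pow_smul, hψ]
    ext d
    simp [apply_layerProj hF he]
  ext d
  simp only [LinearMap.comp_apply, LinearMap.codRestrict_apply, hr₀_apply, LinearMap.pi_apply,
    hlayer, finsetSum_coeff, coeff_mapCoeffs, LinearMap.id_apply]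
  rw [Fin.sum_univ_eq_sum_range (fun j => layerProj e j (p.1.coeff d)), ← LinearMap.sum_apply,
    sum_layerProj, (he N).map_id _ (hN ▸ Submodule.mem_top)]

theorem finite_reesModule [Module.Finite R A] (hF : Monotone F) {N : ℕ} (hN : F N = ⊤)
    {e : ℕ → Module.End R A} (he : ∀ j, LinearMap.IsProj (F j) (e j)) :
    Module.Finite R[X] (reesModule F hF) := by
  obtain ⟨s, r, hrs⟩ := exists_retraction_pi_reesModule hF hN he
  have := Module.Finite.polynomial (R := R) (A := A)
  exact .of_surjective r (LinearMap.surjective_of_comp_eq_id s r hrs)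

theorem projective_reesModule [Module.Projective R A] (hF : Monotone F) {N : ℕ} (hN : F N = ⊤)
    {e : ℕ → Module.End R A} (he : ∀ j, LinearMap.IsProj (F j) (e j)) :
    Module.Projective R[X] (reesModule F hF) := by
  obtain ⟨s, r, hrs⟩ := exists_retraction_pi_reesModule hF hN he
  have := Module.Projective.polynomial (R := R) (A := A)
  have : Module.Projective R[X] (Fin (N + 1) → A[X]) :=
    .of_equiv (DirectSum.linearEquivFunOnFintype R[X] (Fin (N + 1)) fun _ => A[X])
  exact .of_split s r hrs

end Rees

theorem stmt2_general (R A : Type*) [CommRing R] [CommRing A] [Algebra R A]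
    (F : ℕ → Submodule R A) (hmono : Monotone F)
    (hfin0 : Module.Finite R (F 0)) (hproj0 : Module.Projective R (F 0))
    (hfin : ∀ i, 1 ≤ i →
      Module.Finite R (F i ⧸ Submodule.comap (F i).subtype (F (i - 1))))
    (hproj : ∀ i, 1 ≤ i →
      Module.Projective R (F i ⧸ Submodule.comap (F i).subtype (F (i - 1))))
    (hN : ∃ N, F N = ⊤) :
    letI : Algebra (Polynomial R) (Polynomial A) :=
      (Polynomial.mapRingHom (algebraMap R A)).toAlgebra
    ∀ T : Subalgebra (Polynomial R) (Polynomial A),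
      (T : Set (Polynomial A)) = {p : Polynomial A | ∀ i, p.coeff i ∈ F i} →
      Module.Finite (Polynomial R) T ∧ Module.Projective (Polynomial R) T := by
  intro T hT
  obtain ⟨N, hN⟩ := hN
  have hfin' (j : ℕ) := hfin (j + 1) j.succ_pos
  have hproj' (j : ℕ) := hproj (j + 1) j.succ_pos
  have : Module.Finite R A :=
    have := finite_of_finite_graded hmono hfin' N
    .equiv ((LinearEquiv.ofEq _ _ hN).trans Submodule.topEquiv)
  have : Module.Projective R A :=
    have := projective_of_projective_graded hmono hproj' N
    .of_equiv ((LinearEquiv.ofEq _ _ hN).trans Submodule.topEquiv)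
  choose e he using exists_isProj_of_projective_graded hmono hN hproj'
  let eT : T ≃ₗ[R[X]] reesModule F hmono :=
    LinearEquiv.ofEq (Subalgebra.toSubmodule T) _ (SetLike.coe_injective hT)
  have := finite_reesModule hmono hN he
  have := projective_reesModule hmono hN he
  exact ⟨.equiv eT.symm, .of_equiv eT.symm⟩

/-- With `F` a monotone multiplicative exhaustive filtration on a commutative
`R`-algebra `A` with `1 ∈ F 0`, if `gr_0(F) = F 0` and the graded pieces
`gr_i(F) = F i ⧸ F (i-1)` (for `i ≥ 1`) are finitely generated projective `R`-modules, and
`F N = ⊤` for some `N`, then the Rees algebra `{p : A[X] | ∀ i, p.coeff i ∈ F i}` is a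
finitely generated projective module over the polynomial ring `R[X]`, where the
`R[X]`-module structure comes from the coefficient-wise map `R[X] → A[X]`. -/
theorem stmt2 (R A : Type*) [CommRing R] [CommRing A] [Algebra R A]
    (F : ℕ → Submodule R A) (hmono : Monotone F) (hone : (1 : A) ∈ F 0)
    (hmul : ∀ i j, F i * F j ≤ F (i + j)) (hsup : (⨆ i, F i) = ⊤)
    (hfin0 : Module.Finite R (F 0)) (hproj0 : Module.Projective R (F 0))
    (hfin : ∀ i, 1 ≤ i →
      Module.Finite R (F i ⧸ Submodule.comap (F i).subtype (F (i - 1))))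
    (hproj : ∀ i, 1 ≤ i →
      Module.Projective R (F i ⧸ Submodule.comap (F i).subtype (F (i - 1))))
    (hN : ∃ N, F N = ⊤) :
    letI : Algebra (Polynomial R) (Polynomial A) :=
      (Polynomial.mapRingHom (algebraMap R A)).toAlgebra
    ∀ T : Subalgebra (Polynomial R) (Polynomial A),
      (T : Set (Polynomial A)) = {p : Polynomial A | ∀ i, p.coeff i ∈ F i} →
      Module.Finite (Polynomial R) T ∧ Module.Projective (Polynomial R) T :=
  stmt2_general R A F hmono hfin0 hproj0 hfin hproj hN
end

section
/- Assume algebraMap R A is injective. Then the map sending p ∈ S_A to the pair (r, [p.coeff 1]), where r ∈ R is the unique element with algebraMap R A r = p.coeff 0 and [·] denotes the class in A ⧸ Submodule.span R {(1 : A)}, is a surjective R-algebra homomorphism from S_A to TrivSqZeroExt R (A ⧸ Submodule.span R {(1 : A)}) whose kernel is the ideal of S_A generated by the element X; consequently the quotient of S_A by the ideal generated by X is isomorphic as an R-algebra to TrivSqZeroExt R (A ⧸ Submodule.span R {(1 : A)}). -/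
/-!
Reading the constant coefficient in `R` through the injective `algebraMap R A` gives an algebra
map `S_A → R`, and `p ↦ [p.coeff 1]` is a derivation along it, since
`(p q)₁ = p₀ q₁ + p₁ q₀` and `[r a] = r • [a]`; together they form the algebra map to
`TrivSqZeroExt R (A ⧸ R·1)`. It hits `(r, [a])` at `r + a X`, and its kernel consists of the
`p` with `p₀ = 0` and `p₁ ∈ R·1`, which are exactly the products `X · divX p` with
`divX p ∈ S_A`.
-/

open Polynomial

namespace TrivSqZeroExt

variable {R B M : Type*} [CommSemiring R] [Semiring B] [Algebra R B] [AddCommGroup M] [Module R M]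
  [Module Rᵐᵒᵖ M] [IsCentralScalar R M]

noncomputable def algHomOfLeibniz (f : B →ₐ[R] R) (d : B →ₗ[R] M)
    (hd : ∀ a b, d (a * b) = f a • d b + f b • d a) : B →ₐ[R] TrivSqZeroExt R M :=
  AlgHom.ofLinearMap (f.toLinearMap.prod d)
    (ext (map_one f) (by simpa using hd 1 1 : d 1 = 0))
    (fun a b => ext (map_mul f a b) (by rw [snd_mul, op_smul_eq_smul]; exact hd a b))

@[simp]
theorem fst_algHomOfLeibniz (f : B →ₐ[R] R) (d : B →ₗ[R] M)
    (hd : ∀ a b, d (a * b) = f a • d b + f b • d a) (b : B) :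
    (algHomOfLeibniz f d hd b).fst = f b := rfl

@[simp]
theorem snd_algHomOfLeibniz (f : B →ₐ[R] R) (d : B →ₗ[R] M)
    (hd : ∀ a b, d (a * b) = f a • d b + f b • d a) (b : B) :
    (algHomOfLeibniz f d hd b).snd = d b := rfl

end TrivSqZeroExt

theorem Submodule.mem_span_one_iff_mem_range {R A : Type*} [CommRing R] [Ring A] [Algebra R A]
    {a : A} : a ∈ Submodule.span R {(1 : A)} ↔ a ∈ (algebraMap R A).range := by
  rw [← Submodule.one_eq_span, Submodule.mem_one]
  rfl

namespace Polynomial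

variable (R A : Type*) [CommRing R] [CommRing A] [Algebra R A]

-- The Rees algebra of the two-step filtration `R·1 ⊆ A`.
noncomputable def reesSubalgebra : Subalgebra R A[X] :=
  (⊥ : Subalgebra R A).comap ((aeval (0 : A)).restrictScalars R)

variable {R A}

theorem mem_reesSubalgebra {p : A[X]} :
    p ∈ reesSubalgebra R A ↔ p.coeff 0 ∈ (algebraMap R A).range := by
  rw [reesSubalgebra, Subalgebra.mem_comap, Algebra.mem_bot, AlgHom.restrictScalars_apply,
    ← coeff_zero_eq_aeval_zero]
  rfl

theorem coe_reesSubalgebra :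
    (reesSubalgebra R A : Set A[X]) = {p | p.coeff 0 ∈ (algebraMap R A).range} :=
  Set.ext fun _ => mem_reesSubalgebra

theorem mem_reesSubalgebra_of_coeff_zero {p : A[X]} (hp : p.coeff 0 = 0) :
    p ∈ reesSubalgebra R A :=
  mem_reesSubalgebra.2 (hp ▸ zero_mem _)

theorem X_mem_reesSubalgebra : X ∈ reesSubalgebra R A :=
  mem_reesSubalgebra_of_coeff_zero coeff_X_zero

namespace reesSubalgebra

theorem mem_span_X_iff {p : reesSubalgebra R A} :
    p ∈ Ideal.span {⟨X, X_mem_reesSubalgebra⟩} ↔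
      (p : A[X]).coeff 0 = 0 ∧ (p : A[X]).coeff 1 ∈ Submodule.span R {(1 : A)} := by
  rw [Ideal.mem_span_singleton', Submodule.mem_span_one_iff_mem_range]
  constructor
  · rintro ⟨q, rfl⟩
    simpa using mem_reesSubalgebra.1 q.2
  · rintro ⟨h0, h1⟩
    have hq : (p : A[X]).divX ∈ reesSubalgebra R A := by
      rwa [mem_reesSubalgebra, coeff_divX]
    refine ⟨⟨_, hq⟩, Subtype.ext ?_⟩
    conv_rhs => rw [← X_mul_divX_add (p : A[X]), h0, map_zero, add_zero, mul_comm]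
    rfl

variable (hinj : Function.Injective (algebraMap R A))

noncomputable def constCoeff : reesSubalgebra R A →ₐ[R] R :=
  (Algebra.botEquivOfInjective hinj).toAlgHom.comp
    ((((aeval (0 : A)).restrictScalars R).comp (reesSubalgebra R A).val).codRestrict ⊥
      fun p => p.2)

theorem algebraMap_constCoeff (p : reesSubalgebra R A) :
    algebraMap R A (constCoeff hinj p) = (p : A[X]).coeff 0 := by
  rw [coeff_zero_eq_aeval_zero]
  exact congrArg Subtype.val ((Algebra.botEquivOfInjective hinj).symm_apply_apply _)

theorem constCoeff_eq_zero_iff {p : reesSubalgebra R A} :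
    constCoeff hinj p = 0 ↔ (p : A[X]).coeff 0 = 0 := by
  rw [← map_eq_zero_iff _ hinj, algebraMap_constCoeff]

variable (R A) in
noncomputable def coeffOneMod : reesSubalgebra R A →ₗ[R] A ⧸ Submodule.span R {(1 : A)} :=
  (Submodule.span R {(1 : A)}).mkQ ∘ₗ (lcoeff A 1).restrictScalars R ∘ₗ
    (reesSubalgebra R A).val.toLinearMap

theorem coeffOneMod_apply (p : reesSubalgebra R A) :
    coeffOneMod R A p = Submodule.Quotient.mk ((p : A[X]).coeff 1) := rfl

theorem coeffOneMod_mul (p q : reesSubalgebra R A) :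
    coeffOneMod R A (p * q) =
      constCoeff hinj p • coeffOneMod R A q + constCoeff hinj q • coeffOneMod R A p := by
  simp only [coeffOneMod_apply, ← Submodule.Quotient.mk_smul, ← Submodule.Quotient.mk_add,
    Algebra.smul_def, algebraMap_constCoeff, MulMemClass.coe_mul, mul_coeff_one, mul_comm]

variable [Module Rᵐᵒᵖ (A ⧸ Submodule.span R {(1 : A)})]
  [IsCentralScalar R (A ⧸ Submodule.span R {(1 : A)})]

noncomputable def toTrivSqZeroExt :
    reesSubalgebra R A →ₐ[R] TrivSqZeroExt R (A ⧸ Submodule.span R {(1 : A)}) :=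
  TrivSqZeroExt.algHomOfLeibniz (constCoeff hinj) (coeffOneMod R A) (coeffOneMod_mul hinj)

theorem toTrivSqZeroExt_surjective : Function.Surjective (toTrivSqZeroExt hinj) := by
  rintro ⟨r, m⟩
  obtain ⟨a, rfl⟩ := Submodule.Quotient.mk_surjective _ m
  have ha : C a * X ∈ reesSubalgebra R A := mem_reesSubalgebra_of_coeff_zero (coeff_mul_X_zero _)
  refine ⟨algebraMap R _ r + ⟨C a * X, ha⟩, ?_⟩
  have h0 : constCoeff hinj ⟨C a * X, ha⟩ = 0 :=
    (constCoeff_eq_zero_iff hinj).2 (coeff_mul_X_zero _)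
  rw [map_add, AlgHom.commutes, TrivSqZeroExt.algebraMap_eq_inl]
  ext
  · simp [toTrivSqZeroExt, h0]
  · simp [toTrivSqZeroExt, coeffOneMod_apply]

theorem ker_toTrivSqZeroExt :
    RingHom.ker (toTrivSqZeroExt hinj) = Ideal.span {⟨X, X_mem_reesSubalgebra⟩} := by
  ext p
  rw [RingHom.mem_ker, mem_span_X_iff, TrivSqZeroExt.ext_iff, toTrivSqZeroExt,
    TrivSqZeroExt.fst_algHomOfLeibniz, TrivSqZeroExt.snd_algHomOfLeibniz, TrivSqZeroExt.fst_zero,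
    TrivSqZeroExt.snd_zero, constCoeff_eq_zero_iff, coeffOneMod_apply,
    Submodule.Quotient.mk_eq_zero]

noncomputable def quotientSpanXEquiv :
    (reesSubalgebra R A ⧸ Ideal.span {(⟨X, X_mem_reesSubalgebra⟩ : reesSubalgebra R A)})
      ≃ₐ[R] TrivSqZeroExt R (A ⧸ Submodule.span R {(1 : A)}) :=
  (Ideal.quotientEquivAlgOfEq R (ker_toTrivSqZeroExt hinj)).symm.trans
    (Ideal.quotientKerAlgEquivOfSurjective (toTrivSqZeroExt_surjective hinj))

end reesSubalgebra

end Polynomial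

/-- Let `A` be a commutative `R`-algebra with `algebraMap R A` injective, and
let `S_A ⊆ A[X]` be the subalgebra of polynomials whose constant coefficient lies in the image
of `R`. The map sending `p ∈ S_A` to `(r, [p.coeff 1])`, where `r` is the unique element with
`algebraMap R A r = p.coeff 0` and `[·]` is the class in `A ⧸ R·1`, is a surjective `R`-algebra
homomorphism `S_A → TrivSqZeroExt R (A ⧸ R·1)` with kernel the ideal generated by `X`;
consequently `S_A ⧸ (X)` is `R`-algebra isomorphic to `TrivSqZeroExt R (A ⧸ R·1)`. -/
theorem stmt4 (R A : Type*) [CommRing R] [CommRing A] [Algebra R A]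
    (hinj : Function.Injective (algebraMap R A))
    [Module Rᵐᵒᵖ (A ⧸ Submodule.span R {(1 : A)})]
    [IsCentralScalar R (A ⧸ Submodule.span R {(1 : A)})] :
    ∀ S : Subalgebra R (Polynomial A),
      (S : Set (Polynomial A)) =
        {p : Polynomial A | p.coeff 0 ∈ (algebraMap R A).range} →
      ∀ x : S, (x : Polynomial A) = Polynomial.X →
        ∃ φ : S →ₐ[R] TrivSqZeroExt R (A ⧸ Submodule.span R {(1 : A)}),
          (∀ p : S,
            algebraMap R A (φ p).fst = (p : Polynomial A).coeff 0 ∧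
            (φ p).snd =
              Submodule.Quotient.mk ((p : Polynomial A).coeff 1)) ∧
          Function.Surjective φ ∧
          RingHom.ker φ = Ideal.span {x} ∧
          Nonempty ((S ⧸ Ideal.span {x}) ≃ₐ[R]
            TrivSqZeroExt R (A ⧸ Submodule.span R {(1 : A)})) := by
  intro S hS x hx
  obtain rfl : S = reesSubalgebra R A :=
    SetLike.coe_injective (hS.trans coe_reesSubalgebra.symm)
  obtain rfl : x = ⟨X, X_mem_reesSubalgebra⟩ := Subtype.ext hx
  open reesSubalgebra in
  exact ⟨toTrivSqZeroExt hinj, fun p => ⟨algebraMap_constCoeff hinj p, rfl⟩,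
    toTrivSqZeroExt_surjective hinj, ker_toTrivSqZeroExt hinj, ⟨quotientSpanXEquiv hinj⟩⟩
end

section
/- The submodule Submodule.span R {(1 : A)} is a direct summand of the R-module A (i.e. it admits a complementary R-submodule), and the quotient R-module A ⧸ Submodule.span R {(1 : A)} is finitely generated and projective. -/
/-!
Projectivity of `A ⧸ R·1` is a local property, so we may assume `R` local. Then `A` is free and,
if `A ≠ 0`, the residue field `k` embeds into the nonzero `k`-algebra `k ⊗[R] A`; this makes
`R → A` split injective, so `R·1` is a direct summand of `A` and `A ⧸ R·1` is projective.
Back over an arbitrary `R`, a projective quotient `A ⧸ R·1` splits the inclusion `R·1 → A`.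
-/

open Submodule LinearMap TensorProduct

theorem Module.Projective.quotient_span_singleton {R M : Type*} [CommRing R] [AddCommGroup M]
    [Module R M] [Module.Projective R M] {x : M} (φ : M →ₗ[R] R) (hφ : φ x = 1) :
    Module.Projective R (M ⧸ span R {x}) := by
  have hexact : Function.Exact (toSpanSingleton R M x) (span R {x}).mkQ :=
    LinearMap.exact_iff.mpr (by rw [ker_mkQ, LinearMap.span_singleton_eq_range])
  have hsplit := hexact.split_tfae'.out 1 0
  obtain ⟨-, s, hs⟩ := hsplit.mp ⟨mkQ_surjective _, φ, LinearMap.ext_ring (by simpa using hφ)⟩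
  exact .of_split s _ hs

theorem Submodule.exists_isCompl_of_projective_quotient {R M : Type*} [Ring R] [AddCommGroup M]
    [Module R M] (N : Submodule R M) [Module.Projective R (M ⧸ N)] :
    ∃ N' : Submodule R M, IsCompl N N' := by
  obtain ⟨s, hs⟩ := Module.projective_lifting_property N.mkQ LinearMap.id N.mkQ_surjective
  have hsplit := ((LinearMap.exact_subtype_mkQ N).split_tfae N.injective_subtype
    N.mkQ_surjective).out 0 1
  obtain ⟨l, hl⟩ := hsplit.mp ⟨s, hs⟩
  exact ⟨_, LinearMap.isCompl_of_proj (LinearMap.congr_fun hl)⟩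

section Algebra

variable (R A : Type*) [CommRing R] [CommRing A] [Algebra R A]

theorem IsLocalRing.exists_linearMap_apply_one_eq_one [IsLocalRing R] [Module.Finite R A]
    [Module.Flat R A] [Nontrivial A] : ∃ φ : A →ₗ[R] R, φ 1 = 1 := by
  have : Module.Free R A := Module.free_of_flat_of_isLocalRing
  have : Nontrivial (ResidueField R ⊗[R] A) := Module.FaithfullyFlat.rTensor_nontrivial R A _
  have hfactor : (Algebra.linearMap R A).lTensor (ResidueField R) =
      (Algebra.TensorProduct.includeLeft : ResidueField R →ₐ[R] _ ⊗[R] A).toLinearMap ∘ₗ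
        (TensorProduct.rid R (ResidueField R)).toLinearMap := by
    ext; simp
  have hinj : Function.Injective ((Algebra.linearMap R A).lTensor (ResidueField R)) := by
    rw [hfactor, coe_comp]
    exact (RingHom.injective _).comp (TensorProduct.rid R _).injective
  obtain ⟨φ, hφ⟩ := (IsLocalRing.split_injective_iff_lTensor_residueField_injective
    (Algebra.linearMap R A)).mpr hinj
  exact ⟨φ, by simpa using LinearMap.congr_fun hφ 1⟩

theorem Module.Projective.quotient_span_one_of_isLocalRing [IsLocalRing R] [Module.Finite R A]
    [Module.Projective R A] : Module.Projective R (A ⧸ span R {(1 : A)}) := by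
  rcases subsingleton_or_nontrivial A with hA | hA
  · have : Subsingleton (A ⧸ span R {(1 : A)}) := (mkQ_surjective _).subsingleton
    infer_instance
  · obtain ⟨φ, hφ⟩ := IsLocalRing.exists_linearMap_apply_one_eq_one R A
    exact quotient_span_singleton φ hφ

theorem Module.Projective.quotient_span_one [Module.Finite R A] [Module.Projective R A] :
    Module.Projective R (A ⧸ span R {(1 : A)}) := by
  have := Module.finitePresentation_of_projective R A
  have : Module.FinitePresentation R (A ⧸ span R {(1 : A)}) :=
    Module.finitePresentation_of_surjective _ (mkQ_surjective _)
      (by rw [ker_mkQ]; exact fg_span_singleton 1)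
  refine Module.projective_of_localization_maximal' (fun P _ ↦ Localization.AtPrime P) _
    (fun P _ ↦ (span R {(1 : A)}).toLocalizedQuotient' (Localization.AtPrime P) P.primeCompl
      (TensorProduct.mk R (Localization.AtPrime P) A 1)) fun P _ ↦ ?_
  rw [localized'_span, Set.image_singleton]
  exact quotient_span_one_of_isLocalRing _ _

end Algebra

/-- Let `A` be a commutative `R`-algebra that is finitely generated and
projective as an `R`-module. Then `Submodule.span R {1}` is a direct summand of the `R`-module
`A` (it admits a complementary submodule), and the quotient `A ⧸ R·1` is a finitely generated
projective `R`-module. -/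
theorem stmt5 (R A : Type*) [CommRing R] [CommRing A] [Algebra R A]
    [Module.Finite R A] [Module.Projective R A] :
    (∃ N : Submodule R A, IsCompl (Submodule.span R {(1 : A)}) N) ∧
    Module.Finite R (A ⧸ Submodule.span R {(1 : A)}) ∧
    Module.Projective R (A ⧸ Submodule.span R {(1 : A)}) := by
  have := Module.Projective.quotient_span_one R A
  exact ⟨Submodule.exists_isCompl_of_projective_quotient _, inferInstance, this⟩
end

section
/- There exists an R-module basis b : Fin d → A of A with b 0 = 1; consequently the quotient R-module A ⧸ Submodule.span R {(1 : A)} is free of rank d − 1. -/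
/-!
Multiplying `1 = Σ cᵢ bᵢ` by a basis vector `bⱼ` and reading off the `j`-th coordinate writes
`1 ∈ R` as an `R`-linear combination of the coordinates `cᵢ` of `1`, so over a local ring one
of them is a unit. Exchanging that basis vector for `1` changes the determinant by this unit,
so the result is again a basis, and the remaining basis vectors descend to a basis of `A ⧸ R·1`.
-/

namespace Module.Basis

section Exchange

variable {ι R M : Type*} [Fintype ι] [DecidableEq ι] [CommRing R] [AddCommGroup M] [Module R M]

theorem det_update_self (e : Basis ι R M) (i : ι) (x : M) :
    e.det (Function.update e i x) = e.repr x i := by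
  rw [det_apply, toMatrix_update, toMatrix_self, ← Matrix.cramer_apply, Matrix.cramer_one]
  rfl

noncomputable def exchange (e : Basis ι R M) (i : ι) (x : M) (hx : IsUnit (e.repr x i)) :
    Basis ι R M :=
  have h := (e.is_basis_iff_det (v := Function.update e i x)).2 (e.det_update_self i x ▸ hx)
  .mk h.1 h.2.ge

@[simp]
theorem exchange_apply_self (e : Basis ι R M) (i : ι) (x : M) (hx : IsUnit (e.repr x i)) :
    e.exchange i x hx i = x := by
  simp [exchange]

end Exchange

theorem exists_isUnit_repr_one {ι R A : Type*} [CommRing R] [IsLocalRing R] [Ring A]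
    [Algebra R A] [Nonempty ι] (b : Basis ι R A) : ∃ i, IsUnit (b.repr 1 i) := by
  obtain ⟨j⟩ := ‹Nonempty ι›
  by_contra! h
  have hsum : b.repr (b j * 1) j =
      ∑ i ∈ (b.repr 1).support, b.repr 1 i * b.repr (b j * b i) j := by
    conv_lhs => rw [← b.linearCombination_repr 1]
    simp [Finsupp.linearCombination_apply, Finsupp.sum, Finset.mul_sum]
  rw [mul_one, repr_self, Finsupp.single_eq_same] at hsum
  refine IsLocalRing.notMem_maximalIdeal.2 (isUnit_one (M := R)) ?_
  rw [hsum]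
  exact Ideal.sum_mem _ fun i _ => Ideal.mul_mem_right _ _ (h i)

/-- The sequence `0 → R → M → M ⧸ R ∙ b i → 0` is split by the coordinate functional
`b.coord i`, which kills every other basis vector. -/
noncomputable def quotientSpanSingleton {ι R M : Type*} [Ring R] [AddCommGroup M] [Module R M]
    [DecidableEq ι] (b : Basis ι R M) (i : ι) : Basis {j // j ≠ i} R (M ⧸ R ∙ b i) :=
  b.ofSplitExact (f := LinearMap.toSpanSingleton R M (b i)) (s := b.coord i)
    (a := Subtype.val) (b := fun _ : Unit => i)
    (LinearMap.ext_ring (by simp))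
    (by rw [LinearMap.exact_iff, Submodule.ker_mkQ, LinearMap.span_singleton_eq_range])
    (Submodule.mkQ_surjective _)
    Subtype.val_injective
    (fun j => by simp [j.2])
    (.of_subsingleton' () (by simp))
    (by
      refine codisjoint_iff.2 (Set.eq_univ_of_forall fun j => ?_)
      by_cases hj : j = i
      · exact Or.inr ⟨(), hj.symm⟩
      · exact Or.inl ⟨⟨j, hj⟩, rfl⟩)

end Module.Basis

theorem stmt6_general (R A : Type*) [CommRing R] [IsLocalRing R]
    [CommRing A] [Algebra R A] (d : ℕ) (hd : 1 ≤ d) (B : Module.Basis (Fin d) R A) :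
    (∃ b : Module.Basis (Fin d) R A, b ⟨0, hd⟩ = 1) ∧
    Nonempty (Module.Basis (Fin (d - 1)) R (A ⧸ Submodule.span R {(1 : A)})) := by
  have : Nonempty (Fin d) := ⟨⟨0, hd⟩⟩
  obtain ⟨i, hi⟩ := B.exists_isUnit_repr_one
  set b := (B.exchange i 1 hi).reindex (Equiv.swap i ⟨0, hd⟩)
  have hb : b ⟨0, hd⟩ = 1 := by simp [b]
  have hcard : Fintype.card {j // j ≠ (⟨0, hd⟩ : Fin d)} = d - 1 := by simp
  refine ⟨⟨b, hb⟩, ⟨?_⟩⟩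
  rw [← hb]
  exact (b.quotientSpanSingleton ⟨0, hd⟩).reindex (Fintype.equivFinOfCardEq hcard)

/-- Let `R` be a nontrivial commutative local ring, `d ≥ 1`, and `A` a
commutative `R`-algebra that is a free `R`-module with a basis indexed by `Fin d`. Then there
exists an `R`-module basis `b : Fin d → A` of `A` with `b ⟨0, hd⟩ = 1`; consequently the quotient
`A ⧸ R·1` is a free `R`-module of rank `d - 1`. -/
theorem stmt6 (R A : Type*) [CommRing R] [Nontrivial R] [IsLocalRing R]
    [CommRing A] [Algebra R A] (d : ℕ) (hd : 1 ≤ d) (B : Module.Basis (Fin d) R A) :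
    (∃ b : Module.Basis (Fin d) R A, b ⟨0, hd⟩ = 1) ∧
    Nonempty (Module.Basis (Fin (d - 1)) R (A ⧸ Submodule.span R {(1 : A)})) :=
  stmt6_general R A d hd B
end

section
/- The submodule {(m, n) ∈ M × N | f m = g n} of the product module M × N is finitely generated and projective as an R-module. -/
/-- Let `M`, `N`, `P` be finitely generated projective modules over a
commutative ring `R`, `f : M →ₗ[R] P` a surjective linear map and `g : N →ₗ[R] P` a linear map.
Then the pullback submodule `{(m, n) | f m = g n}` of `M × N` is a finitely generated
projective `R`-module. -/
theorem stmt8 (R M N P : Type*) [CommRing R]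
    [AddCommGroup M] [Module R M] [Module.Finite R M] [Module.Projective R M]
    [AddCommGroup N] [Module R N] [Module.Finite R N] [Module.Projective R N]
    [AddCommGroup P] [Module R P] [Module.Finite R P] [Module.Projective R P]
    (f : M →ₗ[R] P) (hf : Function.Surjective f) (g : N →ₗ[R] P) :
    ∀ S : Submodule R (M × N),
      (S : Set (M × N)) = {p : M × N | f p.1 = g p.2} →
      Module.Finite R S ∧ Module.Projective R S := by
  intro S hS
  set h : M × N →ₗ[R] P := f.comp (LinearMap.fst R M N) - g.comp (LinearMap.snd R M N) with hh
  have hSker : S = LinearMap.ker h := by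
    ext x
    have : x ∈ (S : Set (M × N)) ↔ f x.1 = g x.2 := by rw [hS]; rfl
    simpa [hh, LinearMap.mem_ker, sub_eq_zero] using this
  subst hSker
  -- section of h
  obtain ⟨σ, hσ⟩ := Module.projective_lifting_property h (LinearMap.id) (fun p => by
    obtain ⟨m, hm⟩ := hf p
    exact ⟨(m, 0), by simp [hh, hm]⟩)
  have hσ' : ∀ p, h (σ p) = p := fun p => congrArg (· p) (congrArg DFunLike.coe hσ)
  -- retraction onto the kernel
  have hmem : ∀ x : M × N, x - σ (h x) ∈ LinearMap.ker h := fun x => by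
    simp [LinearMap.mem_ker, hσ' (h x)]
  let r : (M × N) →ₗ[R] LinearMap.ker h :=
    LinearMap.codRestrict (LinearMap.ker h) (LinearMap.id - σ.comp h) (fun x => hmem x)
  have hr : ∀ x : LinearMap.ker h, r (x : M × N) = x := by
    intro x
    have hx : h (x : M × N) = 0 := x.2
    apply Subtype.ext
    simp [r, LinearMap.codRestrict, hx]
  have hrsurj : Function.Surjective r := fun x => ⟨x, hr x⟩
  constructor
  · exact Module.Finite.of_surjective r hrsurj
  · exact Module.Projective.of_split (LinearMap.ker h).subtype r (by ext x : 1; exact hr x)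
end

section
/- Let E be an infinite type and let b̄ : E → B ⧸ J be a family such that Algebra.adjoin C (Set.range b̄) = ⊤, i.e. the family generates B ⧸ J as a C-algebra. Then there exists a family b : E → B such that π (b e) = b̄ e for every e ∈ E and Algebra.adjoin C (Set.range b) = ⊤, i.e. every generating family of the quotient algebra indexed by an infinite set lifts to a generating family of B. -/
/-!
Since `B ⧸ J` is of finite type, finitely many `b̄ e` with `e ∈ F` already generate it. Lift
these arbitrarily and lift every other `b̄ e` into the subalgebra `A₀` generated by the chosen
lifts, so that `A₀` maps onto `B ⧸ J`. As `J = I • B` is a finitely generated `C`-module and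
`E ∖ F` is infinite, the finitely many module generators of `J` can be added to the lifts at
distinct indices outside `F` without changing their images. The new family generates a
subalgebra containing `A₀`, hence the generators of `J`, hence `J`; since it also maps onto
`B ⧸ J`, it is all of `B`.
-/

open Set

theorem Algebra.exists_finset_mem_adjoin_image {R A E : Type*} [CommSemiring R] [CommSemiring A]
    [Algebra R A] {v : E → A} {x : A} (hx : x ∈ Algebra.adjoin R (range v)) :
    ∃ F : Finset E, x ∈ Algebra.adjoin R (v '' F) := by
  rw [Algebra.adjoin_range_eq_range_aeval] at hx
  obtain ⟨p, rfl⟩ := (AlgHom.mem_range _).1 hx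
  obtain ⟨F, q, rfl⟩ := p.exists_finset_rename
  refine ⟨F, ?_⟩
  rw [MvPolynomial.aeval_rename, image_eq_range, Algebra.adjoin_range_eq_range_aeval]
  exact AlgHom.mem_range_self _ q

theorem Algebra.exists_finset_adjoin_image_eq_top {R A E : Type*} [CommSemiring R]
    [CommSemiring A] [Algebra R A] [Algebra.FiniteType R A] {v : E → A}
    (hv : Algebra.adjoin R (range v) = ⊤) :
    ∃ F : Finset E, Algebra.adjoin R (v '' F) = ⊤ := by
  classical
  obtain ⟨t, ht⟩ := Algebra.FiniteType.out (R := R) (A := A)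
  choose F hF using fun x : A =>
    exists_finset_mem_adjoin_image (R := R) (hv ▸ Algebra.mem_top : x ∈ Algebra.adjoin R (range v))
  refine ⟨t.sup F, ?_⟩
  rw [← top_le_iff, ← ht, Algebra.adjoin_le_iff]
  intro x hx
  exact Algebra.adjoin_mono (image_mono (Finset.coe_subset.2 (Finset.le_sup hx))) (hF x)

theorem Subalgebra.eq_top_of_map_eq_top {R A Q : Type*} [CommRing R] [Ring A] [Ring Q]
    [Algebra R A] [Algebra R Q] {S : Subalgebra R A} (φ : A →ₐ[R] Q) (hS : S.map φ = ⊤)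
    (hker : ∀ x, φ x = 0 → x ∈ S) : S = ⊤ := by
  refine eq_top_iff.2 fun x _ => ?_
  obtain ⟨y, hy, hyx⟩ := Subalgebra.mem_map.1 (hS ▸ Algebra.mem_top : φ x ∈ S.map φ)
  have hxy : x - y ∈ S := hker _ (by rw [map_sub, hyx, sub_self])
  simpa using add_mem hy hxy

theorem AlgHom.exists_lift_mem_adjoin_image {R A Q E : Type*} [CommSemiring R] [CommSemiring A]
    [CommSemiring Q] [Algebra R A] [Algebra R Q] {φ : A →ₐ[R] Q} (hφ : Function.Surjective φ)
    {v : E → Q} (F : Finset E) (hF : Algebra.adjoin R (v '' F) = ⊤) :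
    ∃ a : E → A, φ ∘ a = v ∧ ∀ e, a e ∈ Algebra.adjoin R (a '' F) := by
  classical
  set f := Function.surjInv hφ
  have hmap : (Algebra.adjoin R ((f ∘ v) '' F)).map φ = ⊤ := by
    rw [← Algebra.adjoin_image, image_image]
    simpa [f, Function.surjInv_eq hφ] using hF
  choose x hx hxv using fun e =>
    Subalgebra.mem_map.1 (hmap ▸ Algebra.mem_top : v e ∈ (Algebra.adjoin R ((f ∘ v) '' F)).map φ)
  have himage : F.piecewise (f ∘ v) x '' F = (f ∘ v) '' F :=
    image_congr fun e he => F.piecewise_eq_of_mem _ _ he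
  refine ⟨F.piecewise (f ∘ v) x, funext fun e => ?_, fun e => ?_⟩
  · by_cases he : e ∈ F <;> simp [he, f, Function.surjInv_eq hφ, hxv]
  · rw [himage]
    by_cases he : e ∈ F
    · rw [F.piecewise_eq_of_mem _ _ he]
      exact Algebra.subset_adjoin (mem_image_of_mem _ he)
    · rw [F.piecewise_eq_of_notMem _ _ he]
      exact hx e

theorem Infinite.exists_eqOn_zero_and_subset_range {E M : Type*} [Infinite E] [Zero M]
    (F : Finset E) (s : Finset M) :
    ∃ c : E → M, (∀ e ∈ F, c e = 0) ∧ ↑s ⊆ range c ∧ ∀ e, c e = 0 ∨ c e ∈ s := by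
  classical
  have : Infinite ((F : Set E)ᶜ : Set E) := F.finite_toSet.infinite_compl.to_subtype
  let g : s ↪ ((F : Set E)ᶜ : Set E) :=
    s.equivFin.toEmbedding.trans (Fin.valEmbedding.trans (Infinite.natEmbedding _))
  have hg : Function.Injective fun k => (g k : E) := Subtype.val_injective.comp g.injective
  refine ⟨Function.extend (fun k => (g k : E)) (fun k => (k : M)) 0, fun e he => ?_, ?_,
    fun e => ?_⟩
  · refine Function.extend_apply' _ _ _ ?_
    rintro ⟨k, rfl⟩
    exact (g k).2 he
  · intro k hk
    exact ⟨g ⟨k, hk⟩, hg.extend_apply _ _ ⟨k, hk⟩⟩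
  · by_cases he : ∃ k, (g k : E) = e
    · obtain ⟨k, rfl⟩ := he
      exact .inr (by rw [hg.extend_apply]; exact k.2)
    · exact .inl (Function.extend_apply' _ _ _ he)

theorem Ideal.exists_lift_adjoin_range_eq_top {C B E : Type*} [CommRing C] [CommRing B]
    [Algebra C B] [Infinite E] {J : Ideal B} [Algebra.FiniteType C (B ⧸ J)]
    (hJ : (J.restrictScalars C).FG) {v : E → B ⧸ J} (hv : Algebra.adjoin C (range v) = ⊤) :
    ∃ b : E → B, Ideal.Quotient.mkₐ C J ∘ b = v ∧ Algebra.adjoin C (range b) = ⊤ := by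
  set π := Ideal.Quotient.mkₐ C J
  obtain ⟨F, hF⟩ := Algebra.exists_finset_adjoin_image_eq_top hv
  obtain ⟨a, ha, haF⟩ :=
    AlgHom.exists_lift_mem_adjoin_image (Ideal.Quotient.mkₐ_surjective C J) F hF
  obtain ⟨s, hs⟩ := hJ
  obtain ⟨c, hcF, hsc, hc⟩ := Infinite.exists_eqOn_zero_and_subset_range F s
  have hsJ : (s : Set B) ⊆ J := fun k hk =>
    (Submodule.restrictScalars_mem C J k).1 (hs ▸ Submodule.subset_span hk)
  have hπc : ∀ e, π (c e) = 0 := fun e => by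
    rcases hc e with h | h
    · simp [h]
    · exact Ideal.Quotient.eq_zero_iff_mem.2 (hsJ h)
  have hπb : π ∘ (a + c) = v := funext fun e => by
    rw [← ha, Function.comp_apply, Pi.add_apply, map_add, hπc, add_zero, Function.comp_apply]
  refine ⟨a + c, hπb, ?_⟩
  set A := Algebra.adjoin C (range (a + c))
  have haA : ∀ e, a e ∈ A := by
    have : a '' F = (a + c) '' F := image_congr fun e he => by simp [hcF e he]
    exact fun e => Algebra.adjoin_mono (this ▸ image_subset_range _ _) (haF e)
  have hJA : ∀ x ∈ J, x ∈ A := fun x hx => by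
    have hspan : Submodule.span C (s : Set B) ≤ Subalgebra.toSubmodule A := by
      rw [Submodule.span_le]
      rintro _ hk
      obtain ⟨e, rfl⟩ := hsc hk
      simpa using sub_mem (Algebra.subset_adjoin (mem_range_self e) : (a + c) e ∈ A) (haA e)
    exact hspan (hs ▸ (Submodule.restrictScalars_mem C J x).2 hx)
  refine Subalgebra.eq_top_of_map_eq_top π ?_ fun x hx =>
    hJA x (Ideal.Quotient.eq_zero_iff_mem.1 hx)
  rw [← Algebra.adjoin_image, ← range_comp, hπb, hv]

/-- Let `B` be a commutative `C`-algebra which is finitely generated as a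
`C`-module, `I` a finitely generated ideal of `C`, `J = I·B`, and `π : B → B ⧸ J` the quotient
map. Every family `b̄ : E → B ⧸ J` indexed by an infinite type `E` that generates `B ⧸ J` as a
`C`-algebra lifts to a family `b : E → B` generating `B` as a `C`-algebra. -/
theorem stmt11 (C B : Type*) [CommRing C] [CommRing B] [Algebra C B]
    [Module.Finite C B] (I : Ideal C) (hI : I.FG)
    (E : Type*) [Infinite E]
    (b' : E → B ⧸ Ideal.map (algebraMap C B) I)
    (hb' : Algebra.adjoin C (Set.range b') = ⊤) :
    ∃ b : E → B,
      (∀ e : E,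
        Ideal.Quotient.mk (Ideal.map (algebraMap C B) I) (b e) = b' e) ∧
      Algebra.adjoin C (Set.range b) = ⊤ := by
  have hJ : ((I.map (algebraMap C B)).restrictScalars C).FG :=
    Ideal.smul_top_eq_map (S := B) I ▸ Submodule.FG.smul hI Module.Finite.fg_top
  obtain ⟨b, hb, htop⟩ := Ideal.exists_lift_adjoin_range_eq_top hJ hb'
  exact ⟨b, congrFun hb, htop⟩
end

section
/- Let s be a subset of B such that Algebra.adjoin C (π '' s) = ⊤, i.e. the images of s generate B ⧸ J as a C-algebra. Then there exists a finite subset T of B contained in the ideal J such that Algebra.adjoin C (s ∪ T) = ⊤. -/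
/-!
Since `I` is finitely generated and `B` is a finite `C`-module, `J = I • B` is a finitely generated
`C`-module; let `T` be a finite set of `C`-module generators of `J`. The subalgebra generated by
`s ∪ T` contains `J` and maps onto `B ⧸ J`, so it is all of `B`.
-/

theorem Ideal.FG.restrictScalars_map {C B : Type*} [CommRing C] [CommRing B] [Algebra C B]
    [Module.Finite C B] {I : Ideal C} (hI : I.FG) :
    ((I.map (algebraMap C B)).restrictScalars C).FG := by
  rw [← Ideal.smul_top_eq_map]
  exact Submodule.FG.smul hI Module.Finite.fg_top

theorem Subalgebra.eq_top_of_le_of_map_mkₐ_eq_top {C B : Type*} [CommRing C] [CommRing B]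
    [Algebra C B] {J : Ideal B} {A : Subalgebra C B} (hJA : (J : Set B) ⊆ A)
    (hA : A.map (Ideal.Quotient.mkₐ C J) = ⊤) : A = ⊤ := by
  refine eq_top_iff.2 fun b _ => ?_
  obtain ⟨a, ha, hab⟩ : Ideal.Quotient.mkₐ C J b ∈ A.map (Ideal.Quotient.mkₐ C J) :=
    hA ▸ Algebra.mem_top
  have hba : b - a ∈ J := Ideal.Quotient.eq.1 hab.symm
  simpa using A.add_mem ha (hJA hba)

/-- Let `B` be a commutative `C`-algebra which is finitely generated as a
`C`-module, `I` a finitely generated ideal of `C`, `J = I·B`, and `π : B → B ⧸ J` the quotient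
map. If `s ⊆ B` is a subset whose image generates `B ⧸ J` as a `C`-algebra, then there is a
finite subset `T` of `B` contained in `J` such that `s ∪ T` generates `B` as a `C`-algebra. -/
theorem stmt12 (C B : Type*) [CommRing C] [CommRing B] [Algebra C B]
    [Module.Finite C B] (I : Ideal C) (hI : I.FG) (s : Set B)
    (hs : Algebra.adjoin C
      (Ideal.Quotient.mk (Ideal.map (algebraMap C B) I) '' s) = ⊤) :
    ∃ T : Finset B,
      (T : Set B) ⊆ (Ideal.map (algebraMap C B) I : Set B) ∧
      Algebra.adjoin C (s ∪ (T : Set B)) = ⊤ := by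
  obtain ⟨T, hT⟩ := hI.restrictScalars_map (B := B)
  refine ⟨T, fun x hx => ?_,
    Subalgebra.eq_top_of_le_of_map_mkₐ_eq_top (J := I.map (algebraMap C B)) ?_ ?_⟩
  · have hxT : x ∈ Submodule.span C (T : Set B) := Submodule.subset_span hx
    rwa [hT] at hxT
  · intro x hx
    have hxT : x ∈ Submodule.span C (T : Set B) := by rwa [hT]
    exact Algebra.adjoin_mono Set.subset_union_right (Algebra.span_le_adjoin C _ hxT)
  · rw [AlgHom.map_adjoin, eq_top_iff, ← hs]
    exact Algebra.adjoin_mono (Set.image_mono Set.subset_union_left)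
end

section
/- The quotient ring A = MvPolynomial (Fin 3) ℤ ⧸ Ideal.span {x*y, x*z, y*z}, where x, y, z denote the three variables, regarded as an algebra over the polynomial ring ℤ[t] via the homomorphism sending t to the image of x + y + z, is a free ℤ[t]-module with basis given by the images of 1, x, y; in particular A is a free module of rank 3 over ℤ[t]. -/
noncomputable section

open MvPolynomial

/-- The ideal `(xy, xz, yz)` of `ℤ[x, y, z]`: three affine lines glued at the origin. -/
def tridentIdeal : Ideal (MvPolynomial (Fin 3) ℤ) :=
  Ideal.span {X 0 * X 1, X 0 * X 2, X 1 * X 2}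

/-- The coordinate ring `ℤ[x, y, z] ⧸ (xy, xz, yz)` of three lines glued at the origin. -/
def TridentRing : Type :=
  MvPolynomial (Fin 3) ℤ ⧸ tridentIdeal

instance : CommRing TridentRing :=
  inferInstanceAs (CommRing (MvPolynomial (Fin 3) ℤ ⧸ tridentIdeal))

/-- The quotient map `ℤ[x, y, z] → ℤ[x, y, z] ⧸ (xy, xz, yz)`. -/
def tridentMk : MvPolynomial (Fin 3) ℤ →+* TridentRing :=
  Ideal.Quotient.mk tridentIdeal

/-- The `ℤ[t]`-algebra structure on `ℤ[x, y, z] ⧸ (xy, xz, yz)` determined by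
`t ↦ x + y + z`. -/
instance : Algebra (Polynomial ℤ) TridentRing :=
  ((Polynomial.aeval (tridentMk (X 0 + X 1 + X 2)) :
    Polynomial ℤ →ₐ[ℤ] TridentRing) : Polynomial ℤ →+* TridentRing).toAlgebra

/-! On the `i`-th line `t = x + y + z` restricts to the coordinate, so restriction to the lines
gives `ℤ[t]`-algebra maps `A → ℤ[t]`; applied to a relation `a + b x + c y = 0` they give `a = 0`,
then `b t = 0` and `c t = 0`. Conversely `x² = t x`, `y² = t y` and `x y = 0`, so the span of
`1, x, y` is a subalgebra; it contains `z = t - x - y`, hence all of `A`. -/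

open scoped Pointwise in
theorem Submodule.mul_mem_span_of_mul_subset {R A : Type*} [CommSemiring R] [Semiring A]
    [Algebra R A] {s : Set A} (hs : s * s ⊆ span R s) {a b : A} (ha : a ∈ span R s)
    (hb : b ∈ span R s) : a * b ∈ span R s := by
  have hab := Submodule.mul_mem_mul ha hb
  rw [Submodule.span_mul_span] at hab
  exact Submodule.span_le.mpr hs hab

theorem MvPolynomial.map_mem_of_forall_X_mem {σ R : Type*} [Ring R]
    (f : MvPolynomial σ ℤ →+* R) {S : Subring R} (h : ∀ i, f (X i) ∈ S)
    (p : MvPolynomial σ ℤ) : f p ∈ S := by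
  induction p using MvPolynomial.induction_on with
  | C c => exact (eq_intCast (f.comp C) c).symm ▸ intCast_mem S c
  | add p q hp hq => exact map_add f p q ▸ S.add_mem hp hq
  | mul_X p i hp => exact (map_mul f p (X i)).symm ▸ S.mul_mem hp (h i)

theorem X_mul_X_mem_tridentIdeal {i j : Fin 3} (hij : i ≠ j) : X i * X j ∈ tridentIdeal := by
  fin_cases i <;> fin_cases j <;> simp at hij <;> apply Ideal.subset_span <;> grind

theorem tridentMk_X_mul_X {i j : Fin 3} (hij : i ≠ j) :
    tridentMk (X i) * tridentMk (X j) = 0 := by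
  rw [← map_mul]
  exact Ideal.Quotient.eq_zero_iff_mem.mpr (X_mul_X_mem_tridentIdeal hij)

theorem algebraMap_tridentRing_X :
    algebraMap (Polynomial ℤ) TridentRing Polynomial.X = ∑ i, tridentMk (X i) := by
  change Polynomial.aeval _ _ = _
  rw [Polynomial.aeval_X, Fin.sum_univ_three, map_add, map_add]

theorem tridentMk_X_mul_self (i : Fin 3) :
    tridentMk (X i) * tridentMk (X i) = (Polynomial.X : Polynomial ℤ) • tridentMk (X i) := by
  rw [Algebra.smul_def, algebraMap_tridentRing_X, Finset.sum_mul,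
    Finset.sum_eq_single i (fun j _ hji => tridentMk_X_mul_X hji) (by simp)]

theorem tridentMk_X_two :
    tridentMk (X 2) = (Polynomial.X : Polynomial ℤ) • 1 - tridentMk (X 0) - tridentMk (X 1) := by
  rw [Algebra.smul_def, mul_one, algebraMap_tridentRing_X, Fin.sum_univ_three]
  abel

theorem tridentIdeal_le_ker_aeval_single (i : Fin 3) :
    tridentIdeal ≤ RingHom.ker (aeval (Pi.single i Polynomial.X) :
      MvPolynomial (Fin 3) ℤ →ₐ[ℤ] Polynomial ℤ) := by
  refine Ideal.span_le.mpr ?_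
  rintro _ (rfl | rfl | rfl) <;> fin_cases i <;> simp

def tridentLineEval (i : Fin 3) : TridentRing →+* Polynomial ℤ :=
  Ideal.Quotient.lift tridentIdeal _ (tridentIdeal_le_ker_aeval_single i)

theorem tridentLineEval_tridentMk_X (i j : Fin 3) :
    tridentLineEval i (tridentMk (X j)) = (Pi.single i Polynomial.X : Fin 3 → Polynomial ℤ) j :=
  aeval_X _ j

theorem tridentLineEval_comp_algebraMap (i : Fin 3) :
    (tridentLineEval i).comp (algebraMap (Polynomial ℤ) TridentRing) = RingHom.id _ := by
  refine Polynomial.ringHom_ext' (RingHom.ext_int _ _) ?_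
  simp [algebraMap_tridentRing_X, tridentLineEval_tridentMk_X, Finset.sum_pi_single']

def tridentLineProj (i : Fin 3) : TridentRing →ₐ[Polynomial ℤ] Polynomial ℤ :=
  { tridentLineEval i with
    commutes' := RingHom.congr_fun (tridentLineEval_comp_algebraMap i) }

theorem tridentLineProj_tridentMk_X (i j : Fin 3) :
    tridentLineProj i (tridentMk (X j)) = (Pi.single i Polynomial.X : Fin 3 → Polynomial ℤ) j :=
  tridentLineEval_tridentMk_X i j

def tridentBasis : Fin 3 → TridentRing :=
  ![1, tridentMk (X 0), tridentMk (X 1)]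

theorem linearIndependent_tridentBasis : LinearIndependent (Polynomial ℤ) tridentBasis := by
  rw [Fintype.linearIndependent_iff]
  intro g hg
  have hproj (i : Fin 3) := congrArg (tridentLineProj i) hg
  simp only [Fin.sum_univ_three, map_add, map_smul, tridentBasis, Matrix.cons_val, map_one, map_zero,
    tridentLineProj_tridentMk_X] at hproj
  have h0 : g 0 = 0 := by simpa using hproj 2
  have h1 : g 1 = 0 := by simpa [h0] using hproj 0
  have h2 : g 2 = 0 := by simpa [h0] using hproj 1
  intro i
  fin_cases i <;> assumption

open scoped Pointwise in
theorem span_tridentBasis_eq_top : Submodule.span (Polynomial ℤ) (Set.range tridentBasis) = ⊤ := by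
  set M := Submodule.span (Polynomial ℤ) (Set.range tridentBasis)
  have h1 : 1 ∈ M := Submodule.subset_span ⟨0, rfl⟩
  have hx : tridentMk (X 0) ∈ M := Submodule.subset_span ⟨1, rfl⟩
  have hy : tridentMk (X 1) ∈ M := Submodule.subset_span ⟨2, rfl⟩
  have hz : tridentMk (X 2) ∈ M := tridentMk_X_two ▸ sub_mem (sub_mem (M.smul_mem _ h1) hx) hy
  have hmul : Set.range tridentBasis * Set.range tridentBasis ⊆ M := by
    rintro _ ⟨_, ⟨i, rfl⟩, _, ⟨j, rfl⟩, rfl⟩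
    fin_cases i <;> fin_cases j <;>
      simp [tridentBasis, tridentMk_X_mul_self, tridentMk_X_mul_X, M.smul_mem, h1, hx, hy]
  let S := M.toSubalgebra h1 fun _ _ => Submodule.mul_mem_span_of_mul_subset hmul
  have hXS (i : Fin 3) : tridentMk (X i) ∈ S.toSubring := by
    fin_cases i
    exacts [hx, hy, hz]
  refine eq_top_iff.mpr fun a _ => ?_
  obtain ⟨f, rfl⟩ := Ideal.Quotient.mk_surjective a
  exact map_mem_of_forall_X_mem tridentMk hXS f

/-- The ring `A = ℤ[x, y, z] ⧸ (xy, xz, yz)`, viewed as an algebra over the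
polynomial ring `ℤ[t]` via `t ↦ x + y + z`, is a free `ℤ[t]`-module with basis the images of
`1, x, y`; in particular `A` is free of rank `3` over `ℤ[t]`. -/
theorem stmt14 :
    ∃ b : Module.Basis (Fin 3) (Polynomial ℤ) TridentRing,
      b 0 = 1 ∧ b 1 = tridentMk (X 0) ∧ b 2 = tridentMk (X 1) :=
  ⟨.mk linearIndependent_tridentBasis span_tridentBasis_eq_top.ge, by simp [tridentBasis],
    by simp [tridentBasis], by simp [tridentBasis]⟩
end
end
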